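/- Let m ∈ ℕ, h = (h_1,…,h_d) ∈ ℤ^d, and suppose the Korobov cubature formula P_m(f,h) := m^{−1} Σ_{ν=1}^m f(w^ν), with nodes w^ν := (2π{νh_1/m}, …, 2π{νh_d/m}), is exact on 𝒯(Γ(N,d)), i.e. P_m(f,h) = (2π)^{−d} ∫_{𝕋^d} f dx for all f ∈ 𝒯(Γ(N,d)). Let ℓ ∈ ℕ be the largest natural number satisfying 2^ℓ ≤ 3^{−d}·N. Then for any s ∈ ℕ^d with ‖s‖₁ ≤ ℓ and any f ∈ 𝒯(R(s)): f(x) = (2π)^{−d} ∫_{𝕋^d} f(y) 𝒱_{2^s}(x − y) dy = m^{−1} Σ_{ν=1}^m f(w^ν) 𝒱_{2^s}(x − w^ν) for all x ∈ 𝕋^d. -/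

import Mathlib

noncomputable section
open scoped BigOperators
open MeasureTheory

/-- The cube `[0, 2π]^d`, representing the torus `𝕋^d`. -/
def cube (d : ℕ) : Set (Fin d → ℝ) := Set.Icc 0 (fun _ => 2 * Real.pi)

/-- Uniform norm over the torus `𝕋^d = [0, 2π]^d`. -/
def unifNorm {d : ℕ} (f : (Fin d → ℝ) → ℂ) : ℝ :=
  ⨆ x : cube d, ‖f ↑x‖

/-- The exponential `e^{i(k,x)}`. -/
def expFun {d : ℕ} (k : Fin d → ℤ) : (Fin d → ℝ) → ℂ :=
  fun x => Complex.exp (Complex.I * ∑ j, (k j : ℂ) * (x j : ℂ))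

/-- `𝒯(Q)`: the space of trigonometric polynomials with frequencies in `Q`. -/
def trigSpace {d : ℕ} (Q : Finset (Fin d → ℤ)) : Submodule ℂ ((Fin d → ℝ) → ℂ) :=
  Submodule.span ℂ (expFun '' (Q : Set (Fin d → ℤ)))

/-- `R(s) = {k : |k_j| < 2^{s_j}}`. -/
def Rbox {d : ℕ} (s : Fin d → ℕ) : Finset (Fin d → ℤ) :=
  Fintype.piFinset fun j => Finset.Ioo (-(2 ^ (s j) : ℤ)) ((2 : ℤ) ^ (s j))

/-- Best uniform approximation `d(f, 𝒯(Q))_∞`. -/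
def distT {d : ℕ} (f : (Fin d → ℝ) → ℂ) (Q : Finset (Fin d → ℤ)) : ℝ :=
  ⨅ u : trigSpace Q, unifNorm (f - (u : (Fin d → ℝ) → ℂ))

/-- `2π`-periodicity in each variable. -/
def Periodic2Pi {d : ℕ} (f : (Fin d → ℝ) → ℂ) : Prop :=
  ∀ (x : Fin d → ℝ) (j : Fin d), f (x + (2 * Real.pi) • (Pi.single j 1 : Fin d → ℝ)) = f x

/-- The Fibonacci numbers `b_0 = b_1 = 1`, `b_n = b_{n-1} + b_{n-2}`. -/
def fibb : ℕ → ℕ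
  | 0 => 1
  | 1 => 1
  | n + 2 => fibb (n + 1) + fibb n

/-- The hyperbolic cross `Γ(N, d)`. -/
def hyperCross (d N : ℕ) : Finset (Fin d → ℤ) :=
  (Fintype.piFinset fun _ : Fin d => Finset.Icc (-(N : ℤ)) (N : ℤ)).filter
    fun k => (∏ j, max |k j| 1) ≤ (N : ℤ)

/-- The Fibonacci points `y^ν = (2πν/b_n, 2π{ν b_{n-1}/b_n})`. -/
def fibPoint (n ν : ℕ) : Fin 2 → ℝ :=
  ![2 * Real.pi * ν / fibb n, 2 * Real.pi * Int.fract ((↑(ν * fibb (n - 1)) : ℝ) / fibb n)]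

/-- The Dirichlet kernel `𝒟_l`. -/
def dirichletK (l : ℕ) (x : ℝ) : ℂ :=
  ∑ k ∈ Finset.Icc (-(l : ℤ)) (l : ℤ), Complex.exp (Complex.I * (k : ℂ) * (x : ℂ))

/-- The de la Vallée Poussin kernel `𝒱_j`. -/
def vpK (j : ℕ) (x : ℝ) : ℂ := (j : ℂ)⁻¹ * ∑ l ∈ Finset.Ico j (2 * j), dirichletK l x

/-- The multivariate de la Vallée Poussin kernel `𝒱_{(j_1,…,j_d)}`. -/
def vpKd {d : ℕ} (j : Fin d → ℕ) (x : Fin d → ℝ) : ℂ := ∏ i, vpK (j i) (x i)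

/-- The Korobov points `w^ν = (2π{νh_1/m}, …, 2π{νh_d/m})`. -/
def korNode (m : ℕ) {d : ℕ} (h : Fin d → ℤ) (ν : ℕ) : Fin d → ℝ :=
  fun i => 2 * Real.pi * Int.fract ((ν : ℝ) * (h i : ℝ) / (m : ℝ))

/-! The de la Vallée Poussin kernel `𝒱_j` is a trigonometric polynomial with frequencies
`|t| < 2j` whose Fourier coefficients equal `1` for `|t| < j`; hence convolution with `𝒱_{2^s}`
reproduces every `f ∈ 𝒯(R(s))`. The integrand `y ↦ f y * 𝒱_{2^s}(x - y)` has frequencies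
`k` with `|k_i| < 3 · 2^{s_i}`, and `∏ 3 · 2^{s_i} = 3^d 2^{‖s‖₁} ≤ N` puts them in `Γ(N, d)`,
where the cubature formula is exact. -/

open Finset Complex

lemma integral_exp_I_int_mul (n : ℤ) :
    ∫ y in Set.Icc (0 : ℝ) (2 * Real.pi), exp (I * n * y) =
      if n = 0 then ((2 * Real.pi : ℝ) : ℂ) else 0 := by
  rw [integral_Icc_eq_integral_Ioc, ← intervalIntegral.integral_of_le (by positivity)]
  split_ifs with hn
  · simp [hn]
  · have hc : I * n ≠ 0 := by simp [hn]
    rw [integral_exp_mul_complex hc]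
    have hper : exp (I * n * (2 * Real.pi)) = 1 := by
      rw [← Complex.exp_int_mul_two_pi_mul_I n]; ring_nf
    simp [hper]

def vpKCoeff (j : ℕ) (t : ℤ) : ℂ := (j : ℂ)⁻¹ * ((Ico j (2 * j)).filter fun l : ℕ => |t| ≤ l).card

lemma vpK_eq_sum (j : ℕ) (x : ℝ) :
    vpK j x = ∑ t ∈ Icc (1 - 2 * j : ℤ) (2 * j - 1), vpKCoeff j t * exp (I * t * x) := by
  have hdirichlet : ∀ l ∈ Ico j (2 * j), dirichletK l x =
      ∑ t ∈ Icc (1 - 2 * j : ℤ) (2 * j - 1), if |t| ≤ l then exp (I * t * x) else 0 := by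
    intro l hl
    rw [mem_Ico] at hl
    rw [dirichletK, ← sum_filter]
    congr 1
    ext t
    simp only [mem_Icc, mem_filter, abs_le]
    omega
  rw [vpK, sum_congr rfl hdirichlet, sum_comm, mul_sum]
  refine sum_congr rfl fun t _ => ?_
  rw [← sum_filter, sum_const, vpKCoeff, nsmul_eq_mul]
  ring

lemma vpKCoeff_of_abs_lt {j : ℕ} {t : ℤ} (ht : |t| < j) : vpKCoeff j t = 1 := by
  have hj : (j : ℂ) ≠ 0 := by
    have : 0 < j := by have := abs_nonneg t; omega
    exact_mod_cast this.ne'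
  have hfilter : (Ico j (2 * j)).filter (fun l : ℕ => |t| ≤ l) = Ico j (2 * j) :=
    filter_true_of_mem fun l hl => by rw [mem_Ico] at hl; omega
  rw [vpKCoeff, hfilter, Nat.card_Ico, show 2 * j - j = j by omega, inv_mul_cancel₀ hj]

@[fun_prop]
lemma continuous_vpK (j : ℕ) : Continuous (vpK j) := by
  unfold vpK dirichletK
  fun_prop

lemma integral_exp_mul_vpK_sub {j : ℕ} {k : ℤ} (hk : |k| < j) (x : ℝ) :
    ∫ y in Set.Icc (0 : ℝ) (2 * Real.pi), exp (I * k * y) * vpK j (x - y) =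
      ((2 * Real.pi : ℝ) : ℂ) * exp (I * k * x) := by
  have hexpand : ∀ y : ℝ, exp (I * k * y) * vpK j (x - y) =
      ∑ t ∈ Icc (1 - 2 * j : ℤ) (2 * j - 1),
        vpKCoeff j t * exp (I * t * x) * exp (I * ((k - t : ℤ) : ℂ) * y) := by
    intro y
    rw [vpK_eq_sum, mul_sum]
    refine sum_congr rfl fun t _ => ?_
    rw [mul_left_comm (exp _), mul_assoc (vpKCoeff j t), ← Complex.exp_add, ← Complex.exp_add]
    congr 2
    push_cast
    ring
  have hintegrable (n : ℤ) : IntegrableOn (fun y : ℝ => exp (I * n * y)) (Set.Icc 0 (2 * Real.pi)) :=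
    (by fun_prop : Continuous _).integrableOn_Icc
  have hk_mem : k ∈ Icc (1 - 2 * j : ℤ) (2 * j - 1) := by
    have := abs_lt.mp hk
    rw [mem_Icc]
    omega
  simp_rw [hexpand]
  rw [integral_finsetSum _ fun t _ => (hintegrable (k - t)).const_mul _,
    sum_eq_single_of_mem k hk_mem]
  · rw [integral_const_mul, integral_exp_I_int_mul, vpKCoeff_of_abs_lt hk]
    simp [mul_comm]
  · intro t _ htk
    rw [integral_const_mul, integral_exp_I_int_mul, if_neg (sub_ne_zero.mpr htk.symm), mul_zero]

lemma integral_cube_prod {d : ℕ} (F : Fin d → ℝ → ℂ) :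
    ∫ y in cube d, ∏ i, F i (y i) = ∏ i, ∫ t in Set.Icc 0 (2 * Real.pi), F i t := by
  have hcube : cube d = Set.univ.pi fun _ => Set.Icc 0 (2 * Real.pi) := by
    rw [cube, ← Set.pi_univ_Icc]; rfl
  rw [hcube, volume_pi, Measure.restrict_pi_pi]
  exact integral_fintype_prod_eq_prod F

lemma expFun_apply {d : ℕ} (k : Fin d → ℤ) (y : Fin d → ℝ) :
    expFun k y = ∏ i, exp (I * k i * y i) := by
  rw [expFun, mul_sum, Complex.exp_sum]
  simp only [mul_assoc]

lemma continuous_expFun {d : ℕ} (k : Fin d → ℤ) : Continuous (expFun k) := by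
  unfold expFun
  fun_prop

lemma continuous_of_mem_trigSpace {d : ℕ} {Q : Finset (Fin d → ℤ)} {f : (Fin d → ℝ) → ℂ}
    (hf : f ∈ trigSpace Q) : Continuous f := by
  induction hf using Submodule.span_induction with
  | mem g hg => obtain ⟨k, -, rfl⟩ := hg; exact continuous_expFun k
  | zero => exact continuous_const
  | add g₁ g₂ _ _ h₁ h₂ => exact h₁.add h₂
  | smul c g _ h => exact h.const_smul c

lemma integral_expFun_mul_vpKd_sub {d : ℕ} {j : Fin d → ℕ} {k : Fin d → ℤ}
    (hk : ∀ i, |k i| < j i) (x : Fin d → ℝ) :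
    ∫ y in cube d, expFun k y * vpKd j (x - y) =
      (((2 * Real.pi) ^ d : ℝ) : ℂ) * expFun k x := by
  simp_rw [expFun_apply, vpKd, ← prod_mul_distrib, Pi.sub_apply]
  rw [integral_cube_prod (fun i t => exp (I * k i * t) * vpK (j i) (x i - t))]
  simp_rw [integral_exp_mul_vpK_sub (hk _), prod_mul_distrib]
  simp

theorem eq_integral_mul_vpKd_sub_of_mem_trigSpace {d : ℕ} {Q : Finset (Fin d → ℤ)}
    {j : Fin d → ℕ} (hQ : ∀ k ∈ Q, ∀ i, |k i| < j i) {f : (Fin d → ℝ) → ℂ}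
    (hf : f ∈ trigSpace Q) (x : Fin d → ℝ) :
    f x = (((2 * Real.pi) ^ d : ℝ) : ℂ)⁻¹ * ∫ y in cube d, f y * vpKd j (x - y) := by
  obtain ⟨c, rfl⟩ := (Submodule.mem_span_image_finset_iff_exists_fun' ℂ).mp hf
  have hintegrable : ∀ k, IntegrableOn (fun y => expFun k y * vpKd j (x - y)) (cube d) := fun k =>
    ((continuous_expFun k).mul (by unfold vpKd; fun_prop)).continuousOn.integrableOn_compact
      isCompact_Icc
  have hpi : (((2 * Real.pi) ^ d : ℝ) : ℂ) ≠ 0 := by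
    exact_mod_cast (pow_pos Real.two_pi_pos d).ne'
  simp only [Finset.sum_apply, Pi.smul_apply, smul_eq_mul, sum_mul, mul_assoc]
  rw [integral_finsetSum _ fun k _ => (hintegrable k).const_mul _, mul_sum]
  refine sum_congr rfl fun k hk => ?_
  rw [integral_const_mul, integral_expFun_mul_vpKd_sub (hQ k hk), mul_left_comm,
    inv_mul_cancel_left₀ hpi]

open scoped Pointwise

lemma trigSpace_mono {d : ℕ} {P Q : Finset (Fin d → ℤ)} (h : P ⊆ Q) : trigSpace P ≤ trigSpace Q :=
  Submodule.span_mono (Set.image_mono (coe_subset.mpr h))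

lemma expFun_add {d : ℕ} (k l : Fin d → ℤ) : expFun (k + l) = expFun k * expFun l := by
  ext y
  simp only [expFun_apply, Pi.add_apply, Pi.mul_apply, ← prod_mul_distrib, ← Complex.exp_add]
  refine prod_congr rfl fun i _ => ?_
  push_cast
  ring_nf

lemma expFun_sub_apply {d : ℕ} (k : Fin d → ℤ) (x y : Fin d → ℝ) :
    expFun k (x - y) = expFun k x * expFun (-k) y := by
  simp only [expFun_apply, Pi.sub_apply, Pi.neg_apply, ← prod_mul_distrib, ← Complex.exp_add]
  refine prod_congr rfl fun i _ => ?_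
  push_cast
  ring_nf

lemma mul_mem_trigSpace {d : ℕ} {P Q : Finset (Fin d → ℤ)} {f g : (Fin d → ℝ) → ℂ}
    (hf : f ∈ trigSpace P) (hg : g ∈ trigSpace Q) : f * g ∈ trigSpace (P + Q) := by
  have hle : trigSpace P * trigSpace Q ≤ trigSpace (P + Q) := by
    rw [trigSpace, trigSpace, Submodule.span_mul_span]
    refine Submodule.span_mono ?_
    rintro _ ⟨_, ⟨k, hk, rfl⟩, _, ⟨l, hl, rfl⟩, rfl⟩
    exact ⟨k + l, by rw [coe_add]; exact Set.add_mem_add hk hl, expFun_add k l⟩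
  exact hle (Submodule.mul_mem_mul hf hg)

lemma comp_sub_mem_trigSpace {d : ℕ} {Q : Finset (Fin d → ℤ)} {f : (Fin d → ℝ) → ℂ}
    (hf : f ∈ trigSpace Q) (x : Fin d → ℝ) : (fun y => f (x - y)) ∈ trigSpace (-Q) := by
  refine (Submodule.map_span_le (LinearMap.funLeft ℂ ℂ (x - ·)) _ _).2 ?_
    (Submodule.mem_map_of_mem hf)
  rintro _ ⟨k, hk, rfl⟩
  have hshift : LinearMap.funLeft ℂ ℂ (x - ·) (expFun k) = expFun k x • expFun (-k) :=
    funext (expFun_sub_apply k x)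
  rw [hshift]
  exact Submodule.smul_mem _ _ (Submodule.subset_span ⟨-k, by simpa using hk, rfl⟩)

lemma prod_sum_exp_mem_trigSpace {d : ℕ} (S : Fin d → Finset ℤ) (a : Fin d → ℤ → ℂ) :
    (fun y : Fin d → ℝ => ∏ i, ∑ t ∈ S i, a i t * exp (I * t * y i)) ∈
      trigSpace (Fintype.piFinset S) := by
  have hsum : (fun y : Fin d → ℝ => ∏ i, ∑ t ∈ S i, a i t * exp (I * t * y i)) =
      ∑ t ∈ Fintype.piFinset S, (∏ i, a i (t i)) • expFun t := by
    ext y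
    simp only [prod_univ_sum, Finset.sum_apply, Pi.smul_apply, smul_eq_mul, expFun_apply,
      prod_mul_distrib]
  rw [hsum]
  exact Submodule.sum_mem _ fun t ht => Submodule.smul_mem _ _ (Submodule.subset_span ⟨t, ht, rfl⟩)

def vpBox {d : ℕ} (j : Fin d → ℕ) : Finset (Fin d → ℤ) :=
  Fintype.piFinset fun i => Icc (1 - 2 * j i : ℤ) (2 * j i - 1)

lemma neg_vpBox {d : ℕ} (j : Fin d → ℕ) : -vpBox j = vpBox j := by
  ext k
  simp only [vpBox, mem_neg', Fintype.mem_piFinset, Pi.neg_apply, mem_Icc]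
  exact forall_congr' fun i => by omega

lemma vpKd_sub_mem_trigSpace {d : ℕ} (j : Fin d → ℕ) (x : Fin d → ℝ) :
    (fun y => vpKd j (x - y)) ∈ trigSpace (vpBox j) := by
  have hvpKd : vpKd j ∈ trigSpace (vpBox j) := by
    rw [show vpKd j = fun y => ∏ i, vpK (j i) (y i) from rfl]
    simp only [vpK_eq_sum]
    exact prod_sum_exp_mem_trigSpace _ _
  simpa only [neg_vpBox] using comp_sub_mem_trigSpace hvpKd x

lemma mem_hyperCross_of_abs_le {d N : ℕ} {b : Fin d → ℕ} (hb : ∀ i, 1 ≤ b i)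
    (hbN : ∏ i, b i ≤ N) {k : Fin d → ℤ} (hk : ∀ i, |k i| ≤ b i) : k ∈ hyperCross d N := by
  have hprod : ∏ i, max |k i| 1 ≤ N := calc
    ∏ i, max |k i| 1 ≤ ∏ i, (b i : ℤ) :=
      prod_le_prod (fun i _ => by positivity) fun i _ => max_le (hk i) (by exact_mod_cast hb i)
    _ ≤ N := by exact_mod_cast hbN
  refine mem_filter.mpr ⟨Fintype.mem_piFinset.mpr fun i => ?_, hprod⟩
  have hbi : b i ≤ N := (single_le_prod' (fun i _ => hb i) (mem_univ i)).trans hbN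
  rw [mem_Icc, ← abs_le]
  exact (hk i).trans (by exact_mod_cast hbi)

lemma Rbox_add_vpBox_subset_hyperCross {d N : ℕ} {s : Fin d → ℕ}
    (hN : 3 ^ d * 2 ^ (∑ i, s i) ≤ N) : Rbox s + vpBox (fun i => 2 ^ s i) ⊆ hyperCross d N := by
  intro _ hkt
  obtain ⟨k, hk, t, ht, rfl⟩ := mem_add.mp hkt
  refine mem_hyperCross_of_abs_le (b := fun i => 3 * 2 ^ s i) (fun i => ?_) ?_ fun i => ?_
  · have := Nat.one_le_two_pow (n := s i); omega
  · rwa [prod_mul_distrib, prod_const, card_univ, Fintype.card_fin, prod_pow_eq_pow_sum]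
  · have hki := mem_Ioo.mp (Fintype.mem_piFinset.mp hk i)
    have hti := mem_Icc.mp (Fintype.mem_piFinset.mp ht i)
    push_cast at hti ⊢
    rw [Pi.add_apply, abs_le]
    omega

lemma abs_lt_of_mem_Rbox {d : ℕ} {s : Fin d → ℕ} {k : Fin d → ℤ} (hk : k ∈ Rbox s) (i : Fin d) :
    |k i| < ((2 ^ s i : ℕ) : ℤ) := by
  push_cast
  exact abs_lt.mpr (mem_Ioo.mp (Fintype.mem_piFinset.mp hk i))

theorem stmt14_general (d m N : ℕ) (h : Fin d → ℤ)
    (hex : ∀ f ∈ trigSpace (hyperCross d N),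
      (m : ℂ)⁻¹ * ∑ ν ∈ Finset.Icc 1 m, f (korNode m h ν) =
        (((2 * Real.pi) ^ d : ℝ) : ℂ)⁻¹ * ∫ x in cube d, f x)
    (ℓ : ℕ) (hℓ : IsGreatest {k : ℕ | (2 : ℝ) ^ k ≤ ((3 : ℝ) ^ d)⁻¹ * N} ℓ)
    (s : Fin d → ℕ) (hs : (∑ j, s j) ≤ ℓ)
    (f : (Fin d → ℝ) → ℂ) (hf : f ∈ trigSpace (Rbox s)) (x : Fin d → ℝ) :
    f x = (((2 * Real.pi) ^ d : ℝ) : ℂ)⁻¹ *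
        (∫ y in cube d, f y * vpKd (fun i => 2 ^ s i) (x - y)) ∧
    f x = (m : ℂ)⁻¹ * ∑ ν ∈ Finset.Icc 1 m,
        f (korNode m h ν) * vpKd (fun i => 2 ^ s i) (x - korNode m h ν) := by
  have hN : 3 ^ d * 2 ^ (∑ i, s i) ≤ N := by
    have h2 : (2 : ℝ) ^ (∑ i, s i) ≤ ((3 : ℝ) ^ d)⁻¹ * N :=
      (pow_le_pow_right₀ one_le_two hs).trans hℓ.1
    rw [le_inv_mul_iff₀ (by positivity)] at h2
    exact_mod_cast h2
  have hI := eq_integral_mul_vpKd_sub_of_mem_trigSpace (fun k hk => abs_lt_of_mem_Rbox hk) hf x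
  have hmem : (fun y => f y * vpKd (fun i => 2 ^ s i) (x - y)) ∈ trigSpace (hyperCross d N) :=
    trigSpace_mono (Rbox_add_vpBox_subset_hyperCross hN)
      (mul_mem_trigSpace hf (vpKd_sub_mem_trigSpace _ x))
  exact ⟨hI, hI.trans (hex _ hmem).symm⟩

/-- reproducing property (I) of the Korobov point set via the de la
Vallée Poussin kernels (Theorem CT1 (I)). -/
theorem stmt14 (d m N : ℕ) (hd : 0 < d) (hm : 0 < m) (h : Fin d → ℤ)
    (hex : ∀ f ∈ trigSpace (hyperCross d N),
      (m : ℂ)⁻¹ * ∑ ν ∈ Finset.Icc 1 m, f (korNode m h ν) =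
        (((2 * Real.pi) ^ d : ℝ) : ℂ)⁻¹ * ∫ x in cube d, f x)
    (ℓ : ℕ) (hℓ : IsGreatest {k : ℕ | (2 : ℝ) ^ k ≤ ((3 : ℝ) ^ d)⁻¹ * N} ℓ)
    (s : Fin d → ℕ) (hs : (∑ j, s j) ≤ ℓ)
    (f : (Fin d → ℝ) → ℂ) (hf : f ∈ trigSpace (Rbox s)) (x : Fin d → ℝ) :
    f x = (((2 * Real.pi) ^ d : ℝ) : ℂ)⁻¹ *
        (∫ y in cube d, f y * vpKd (fun i => 2 ^ s i) (x - y)) ∧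
    f x = (m : ℂ)⁻¹ * ∑ ν ∈ Finset.Icc 1 m,
        f (korNode m h ν) * vpKd (fun i => 2 ^ s i) (x - korNode m h ν) :=
  stmt14_general d m N h hex ℓ hℓ s hs f hf x
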